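/- arXiv:1009.6229 — 6 statements merged into one kernel-verified Lean document; each statement's English description precedes it below -/
import Mathlib

section
/- Let μ be a grade-2 additive set function on a σ-algebra 𝒜 with μ(∅)=0, and define the interference term I(A,B) = μ(A∪B) − μ(A) − μ(B) for disjoint A,B. Then for mutually disjoint sets A₁,…,Aₙ ∈ 𝒜, μ(⋃ᵢ Aᵢ) = Σᵢ μ(Aᵢ) + Σ_{i<j} I(Aᵢ,Aⱼ). -/
/-!
Applying grade-2 additivity to the triple `(B a, ⋃ i ∈ s, B i, C)` and inducting on `s` shows
that adjoining a disjoint set `C` to a disjoint union adds `μ C` plus the interference of `C`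
with each piece. Adding the sets `A i` one at a time in increasing order of `i` then produces
exactly the interferences `I(A i, A j)` with `i < j`.
-/

open Finset

section

variable {Ω ι : Type*} [MeasurableSpace Ω]

def IsGradeTwoAdditive (μ : Set Ω → ℝ) : Prop :=
  ∀ A B C : Set Ω, MeasurableSet A → MeasurableSet B → MeasurableSet C →
    Disjoint A B → Disjoint A C → Disjoint B C →
    μ (A ∪ B ∪ C) = μ (A ∪ B) + μ (A ∪ C) + μ (B ∪ C) - μ A - μ B - μ C

def interference (μ : Set Ω → ℝ) (A B : Set Ω) : ℝ := μ (A ∪ B) - μ A - μ B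

namespace IsGradeTwoAdditive

variable {μ : Set Ω → ℝ}

theorem apply_biUnion_union [DecidableEq ι] (hμ : IsGradeTwoAdditive μ) (hempty : μ ∅ = 0)
    {s : Finset ι} {B : ι → Set Ω} {C : Set Ω} (hB : ∀ i ∈ s, MeasurableSet (B i))
    (hC : MeasurableSet C) (hBB : (s : Set ι).PairwiseDisjoint B)
    (hBC : ∀ i ∈ s, Disjoint (B i) C) :
    μ ((⋃ i ∈ s, B i) ∪ C) = μ (⋃ i ∈ s, B i) + μ C + ∑ i ∈ s, interference μ (B i) C := by
  induction s using Finset.induction_on with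
  | empty => simp [hempty]
  | insert a s ha ih =>
    simp only [coe_insert, Set.pairwiseDisjoint_insert, mem_insert, forall_eq_or_imp] at hB hBB hBC
    have hS : MeasurableSet (⋃ i ∈ s, B i) := s.measurableSet_biUnion hB.2
    have hBaS : Disjoint (B a) (⋃ i ∈ s, B i) :=
      Set.disjoint_iUnion₂_right.2 fun i hi => hBB.2 i hi (ne_of_mem_of_not_mem hi ha).symm
    have hSC : Disjoint (⋃ i ∈ s, B i) C := Set.disjoint_iUnion₂_left.2 hBC.2
    rw [set_biUnion_insert, hμ _ _ _ hB.1 hS hC hBaS hBC.1 hSC, ih hB.2 hBB.1 hBC.2,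
      sum_insert ha, interference]
    ring

theorem apply_biUnion [LinearOrder ι] (hμ : IsGradeTwoAdditive μ) (hempty : μ ∅ = 0)
    {s : Finset ι} {A : ι → Set Ω} (hA : ∀ i ∈ s, MeasurableSet (A i))
    (hAA : (s : Set ι).PairwiseDisjoint A) :
    μ (⋃ i ∈ s, A i) =
      ∑ i ∈ s, μ (A i) + ∑ i ∈ s, ∑ j ∈ s with i < j, interference μ (A i) (A j) := by
  induction s using Finset.induction_on_max with
  | empty => simp [hempty]
  | insert a s ha ih =>
    have has : a ∉ s := fun h => lt_irrefl a (ha a h)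
    simp only [coe_insert, Set.pairwiseDisjoint_insert, mem_insert, forall_eq_or_imp] at hA hAA
    have hunion := hμ.apply_biUnion_union hempty hA.2 hA.1 hAA.1
      fun i hi => (hAA.2 i hi (ha i hi).ne').symm
    have hmax : ∀ i ∈ s, ∑ j ∈ insert a s with i < j, interference μ (A i) (A j) =
        ∑ j ∈ s with i < j, interference μ (A i) (A j) + interference μ (A i) (A a) := by
      intro i hi
      rw [filter_insert, if_pos (ha i hi), sum_insert (by simp [has]), add_comm]
    have hnone : ∑ j ∈ insert a s with a < j, interference μ (A a) (A j) = 0 := by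
      rw [filter_false_of_mem, sum_empty]
      intro j hj
      rcases mem_insert.1 hj with rfl | hj
      exacts [lt_irrefl j, (ha j hj).not_gt]
    rw [set_biUnion_insert, Set.union_comm, hunion, ih hA.2 hAA.1, sum_insert has,
      sum_insert has, hnone, sum_congr rfl hmax, sum_add_distrib]
    simp only [interference]
    ring

end IsGradeTwoAdditive

end

theorem stmt_0_general {Ω : Type*} [MeasurableSpace Ω] (μ : Set Ω → ℝ)
    (hempty : μ ∅ = 0)
    (hgrade2 : ∀ A B C : Set Ω, MeasurableSet A → MeasurableSet B → MeasurableSet C →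
      Disjoint A B → Disjoint A C → Disjoint B C →
      μ (A ∪ B ∪ C) = μ (A ∪ B) + μ (A ∪ C) + μ (B ∪ C) - μ A - μ B - μ C)
    (n : ℕ) (A : Fin n → Set Ω) (hA : ∀ i, MeasurableSet (A i))
    (hdisj : ∀ i j, i ≠ j → Disjoint (A i) (A j)) :
    μ (⋃ i, A i) = ∑ i, μ (A i) +
      ∑ i, ∑ j ∈ Finset.Ioi i, (μ (A i ∪ A j) - μ (A i) - μ (A j)) := by
  have h := IsGradeTwoAdditive.apply_biUnion (s := univ) hgrade2 hempty (fun i _ => hA i)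
    fun i _ j _ hij => hdisj i j hij
  simpa only [mem_univ, Set.iUnion_true, filter_lt_eq_Ioi, interference] using h

/-- Grade-2 additivity: for mutually disjoint measurable sets `A₁,…,Aₙ`,
`μ(⋃ᵢ Aᵢ) = Σᵢ μ(Aᵢ) + Σ_{i<j} I(Aᵢ,Aⱼ)` where `I(A,B) = μ(A∪B) − μ(A) − μ(B)`. -/
theorem stmt_0 {Ω : Type*} [MeasurableSpace Ω] (μ : Set Ω → ℝ)
    (hnonneg : ∀ A, MeasurableSet A → 0 ≤ μ A)
    (hempty : μ ∅ = 0)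
    (hgrade2 : ∀ A B C : Set Ω, MeasurableSet A → MeasurableSet B → MeasurableSet C →
      Disjoint A B → Disjoint A C → Disjoint B C →
      μ (A ∪ B ∪ C) = μ (A ∪ B) + μ (A ∪ C) + μ (B ∪ C) - μ A - μ B - μ C)
    (n : ℕ) (A : Fin n → Set Ω) (hA : ∀ i, MeasurableSet (A i))
    (hdisj : ∀ i j, i ≠ j → Disjoint (A i) (A j)) :
    μ (⋃ i, A i) = ∑ i, μ (A i) +
      ∑ i, ∑ j ∈ Finset.Ioi i, (μ (A i ∪ A j) - μ (A i) - μ (A j)) :=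
  stmt_0_general μ hempty hgrade2 n A hA hdisj
end

section
/- Let D: 𝒜 × 𝒜 → ℂ be a decoherence functional and μ(A) = D(A,A). If A ∩ B = ∅ and μ(A ∪ B) = 0, then μ(A) = μ(B). -/
/-! Expanding `μ(A ∪ B)` by biadditivity gives `0 = μ(A) + μ(B) + 2 Re D(A,B)`, so
`Re D(A,B) = -(μ(A) + μ(B))/2`. Cauchy–Schwarz then yields `((μ(A) + μ(B))/2)² ≤ μ(A) μ(B)`,
i.e. `(μ(A) - μ(B))² ≤ 0`. -/

theorem eq_of_sq_le_mul_of_add_add_two_mul_eq_zero {a b r : ℝ} (hr : r ^ 2 ≤ a * b)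
    (h : a + b + 2 * r = 0) : a = b := by
  have hr' : r = -(a + b) / 2 := by linarith
  subst hr'
  nlinarith [sq_nonneg (a - b)]

theorem Complex.sq_re_le_sq_norm (z : ℂ) : z.re ^ 2 ≤ ‖z‖ ^ 2 :=
  sq_le_sq.mpr ((abs_re_le_norm z).trans_eq (abs_norm z).symm)

section DecoherenceFunctional

variable {Ω : Type*} {D : Set Ω → Set Ω → ℂ}

theorem re_apply_union_union_self (hherm : ∀ A B, D A B = starRingEnd ℂ (D B A))
    (hadd : ∀ A B C : Set Ω, Disjoint A B → D (A ∪ B) C = D A C + D B C)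
    {A B : Set Ω} (hAB : Disjoint A B) :
    (D (A ∪ B) (A ∪ B)).re = (D A A).re + (D B B).re + 2 * (D A B).re := by
  have hright (C : Set Ω) : D C (A ∪ B) = D C A + D C B := by
    rw [hherm, hadd A B C hAB, map_add, ← hherm, ← hherm]
  have hsymm : (D B A).re = (D A B).re := by rw [hherm B A, Complex.conj_re]
  rw [hadd A B _ hAB, hright, hright]
  simp only [Complex.add_re]
  linarith

end DecoherenceFunctional

theorem stmt_4_general {Ω : Type*} (D : Set Ω → Set Ω → ℂ)
    (hherm : ∀ A B, D A B = starRingEnd ℂ (D B A))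
    (hadd : ∀ A B C : Set Ω, Disjoint A B → D (A ∪ B) C = D A C + D B C)
    (hcs : ∀ A B : Set Ω, ‖D A B‖ ^ 2 ≤ (D A A).re * (D B B).re)
    (A B : Set Ω) (hAB : Disjoint A B) (h : (D (A ∪ B) (A ∪ B)).re = 0) :
    (D A A).re = (D B B).re := by
  have hsum := re_apply_union_union_self hherm hadd hAB
  have hre : (D A B).re ^ 2 ≤ (D A A).re * (D B B).re :=
    (Complex.sq_re_le_sq_norm _).trans (hcs A B)
  exact eq_of_sq_le_mul_of_add_add_two_mul_eq_zero hre (by linarith)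

/-- For a decoherence functional `D` with `μ(A) = D(A,A)`: if `A ∩ B = ∅` and
`μ(A ∪ B) = 0`, then `μ(A) = μ(B)`. -/
theorem stmt_4 {Ω : Type*} (D : Set Ω → Set Ω → ℂ)
    (hherm : ∀ A B, D A B = starRingEnd ℂ (D B A))
    (hadd : ∀ A B C : Set Ω, Disjoint A B → D (A ∪ B) C = D A C + D B C)
    (hpos : ∀ A : Set Ω, 0 ≤ (D A A).re ∧ (D A A).im = 0)
    (hcs : ∀ A B : Set Ω, ‖D A B‖ ^ 2 ≤ (D A A).re * (D B B).re)
    (A B : Set Ω) (hAB : Disjoint A B) (h : (D (A ∪ B) (A ∪ B)).re = 0) :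
    (D A A).re = (D B B).re :=
  stmt_4_general D hherm hadd hcs A B hAB h
end

section
/- In the quantum computer model, μ is additive in the last coordinate: if B₁,…,B_k ⊆ 𝒪ₙ are mutually disjoint, then μ(A₁×⋯×Aₙ₋₁×(⋃ᵢBᵢ)) = Σᵢ μ(A₁×⋯×Aₙ₋₁×Bᵢ). -/
/-!
Each `v ω` ends with the projection `P (last n) (ω (last n))`, and projections onto different
outcomes have orthogonal ranges. So `⟪v ω', v ω⟫ = 0` whenever the last outcomes of `ω` and `ω'`
differ, in particular whenever they fall into different blocks `B i ≠ B j`: the double sum over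
the union is block diagonal, i.e. the sum of the double sums over the blocks.
-/

open Finset Fintype

theorem Finset.sum_sum_biUnion_of_pairwiseDisjoint {ι α M : Type*} [DecidableEq α]
    [AddCommMonoid M] {t : Finset ι} {s : ι → Finset α} (hs : (t : Set ι).PairwiseDisjoint s)
    (f : α → α → M) (hf : ∀ i ∈ t, ∀ j ∈ t, i ≠ j → ∀ x ∈ s i, ∀ y ∈ s j, f x y = 0) :
    ∑ x ∈ t.biUnion s, ∑ y ∈ t.biUnion s, f x y = ∑ i ∈ t, ∑ x ∈ s i, ∑ y ∈ s i, f x y := by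
  rw [sum_biUnion hs]
  refine sum_congr rfl fun i hi => sum_congr rfl fun x hx => ?_
  rw [sum_biUnion hs]
  exact sum_eq_single_of_mem i hi fun j hj hji => sum_eq_zero (hf i hi j hj hji.symm x hx)

theorem List.foldl_finRange_succ {X : Type*} {n : ℕ} (f : X → Fin (n + 1) → X) (x : X) :
    (finRange (n + 1)).foldl f x =
      f ((finRange n).foldl (fun y i => f y i.castSucc) x) (Fin.last n) := by
  rw [finRange_succ_last, foldl_append, foldl_map]
  rfl

theorem LinearMap.IsSymmetric.inner_apply_eq_zero_of_comp_eq_zero {𝕜 E : Type*} [RCLike 𝕜]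
    [NormedAddCommGroup E] [InnerProductSpace 𝕜 E] {T S : E →ₗ[𝕜] E} (hT : T.IsSymmetric)
    (hTS : T ∘ₗ S = 0) (x y : E) : inner 𝕜 (T x) (S y) = 0 := by
  rw [hT, ← comp_apply, hTS, zero_apply, inner_zero_right]

theorem Fintype.piFinset_update_biUnion {α ι : Type*} [DecidableEq α] [Fintype α] {δ : α → Type*}
    [∀ a, DecidableEq (δ a)] (s : ∀ a, Finset (δ a)) (a : α) (t : Finset ι)
    (B : ι → Finset (δ a)) :
    piFinset (Function.update s a (t.biUnion B)) =
      t.biUnion fun j => piFinset (Function.update s a (B j)) := by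
  ext f
  simp only [mem_piFinset, Function.forall_update_iff s (p := fun b u => f b ∈ u), mem_biUnion]
  tauto

theorem stmt_12_general {H : Type*} [NormedAddCommGroup H] [InnerProductSpace ℂ H]
    (n : ℕ) (O : Fin (n + 1) → Type*) [∀ i, Fintype (O i)] [∀ i, DecidableEq (O i)]
    (U : Fin (n + 1) → H ≃ₗᵢ[ℂ] H) (P : (i : Fin (n + 1)) → O i → (H →ₗ[ℂ] H))
    (hsymm : ∀ i a, LinearMap.IsSymmetric (P i a))
    (horth : ∀ i a b, a ≠ b → (P i a) ∘ₗ (P i b) = 0)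
    (ψ : H)
    (v : (∀ i, O i) → H)
    (hv : ∀ ω, v ω = (List.finRange (n + 1)).foldl (fun x i => P i (ω i) (U i x)) ψ)
    (A : (i : Fin (n + 1)) → Finset (O i))
    (k : ℕ) (B : Fin k → Finset (O (Fin.last n)))
    (hB : ∀ i j, i ≠ j → Disjoint (B i) (B j)) :
    ∑ ω ∈ Fintype.piFinset (Function.update A (Fin.last n) (Finset.univ.biUnion B)),
      ∑ ω' ∈ Fintype.piFinset (Function.update A (Fin.last n) (Finset.univ.biUnion B)),
        (inner ℂ (v ω') (v ω) : ℂ) =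
      ∑ j : Fin k,
        ∑ ω ∈ Fintype.piFinset (Function.update A (Fin.last n) (B j)),
          ∑ ω' ∈ Fintype.piFinset (Function.update A (Fin.last n) (B j)),
            (inner ℂ (v ω') (v ω) : ℂ) := by
  have hcross : ∀ ω ω' : ∀ i, O i, ω (Fin.last n) ≠ ω' (Fin.last n) →
      inner ℂ (v ω') (v ω) = 0 := by
    intro ω ω' hne
    rw [hv, hv, List.foldl_finRange_succ, List.foldl_finRange_succ]
    exact (hsymm _ _).inner_apply_eq_zero_of_comp_eq_zero (horth _ _ _ hne.symm) _ _
  have hlast : ∀ j, ∀ ω ∈ piFinset (Function.update A (Fin.last n) (B j)),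
      ω (Fin.last n) ∈ B j :=
    fun j ω hω => by simpa using mem_piFinset.1 hω (Fin.last n)
  have hdisj : ((univ : Finset (Fin k)) : Set (Fin k)).PairwiseDisjoint
      fun j => piFinset (Function.update A (Fin.last n) (B j)) :=
    fun i _ j _ hij =>
      piFinset_disjoint_of_disjoint _ _ (a := Fin.last n) (by simpa using hB i j hij)
  rw [piFinset_update_biUnion, sum_sum_biUnion_of_pairwiseDisjoint hdisj]
  intro i _ j _ hij ω hω ω' hω'
  exact hcross _ _ ((hB i j hij).forall_ne_finset (hlast i ω hω) (hlast j ω' hω'))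

/-- The q-measure is additive in the last coordinate: for mutually disjoint
`B₁,…,B_k ⊆ 𝒪ₙ`, `μ(A₁×⋯×Aₙ₋₁×(⋃ⱼBⱼ)) = Σⱼ μ(A₁×⋯×Aₙ₋₁×Bⱼ)`. -/
theorem stmt_12 {H : Type*} [NormedAddCommGroup H] [InnerProductSpace ℂ H]
    [FiniteDimensional ℂ H]
    (n : ℕ) (O : Fin (n + 1) → Type*) [∀ i, Fintype (O i)] [∀ i, DecidableEq (O i)]
    (U : Fin (n + 1) → H ≃ₗᵢ[ℂ] H) (P : (i : Fin (n + 1)) → O i → (H →ₗ[ℂ] H))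
    (hidem : ∀ i a, (P i a) ∘ₗ (P i a) = P i a)
    (hsymm : ∀ i a, LinearMap.IsSymmetric (P i a))
    (horth : ∀ i a b, a ≠ b → (P i a) ∘ₗ (P i b) = 0)
    (hsum : ∀ i, ∑ a, P i a = LinearMap.id)
    (ψ : H) (hψ : ‖ψ‖ = 1)
    (v : (∀ i, O i) → H)
    (hv : ∀ ω, v ω = (List.finRange (n + 1)).foldl (fun x i => P i (ω i) (U i x)) ψ)
    (A : (i : Fin (n + 1)) → Finset (O i))
    (k : ℕ) (B : Fin k → Finset (O (Fin.last n)))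
    (hB : ∀ i j, i ≠ j → Disjoint (B i) (B j)) :
    ∑ ω ∈ Fintype.piFinset (Function.update A (Fin.last n) (Finset.univ.biUnion B)),
      ∑ ω' ∈ Fintype.piFinset (Function.update A (Fin.last n) (Finset.univ.biUnion B)),
        (inner ℂ (v ω') (v ω) : ℂ) =
      ∑ j : Fin k,
        ∑ ω ∈ Fintype.piFinset (Function.update A (Fin.last n) (B j)),
          ∑ ω' ∈ Fintype.piFinset (Function.update A (Fin.last n) (B j)),
            (inner ℂ (v ω') (v ω) : ℂ) :=
  stmt_12_general n O U P hsymm horth ψ v hv A k B hB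
end

section
/- Let Ω be a finite set, D: Ω × Ω → ℂ hermitian with the extension D(A,B) = Σ_{ω∈A,ω'∈B} D(ω,ω') satisfying D(A,A) ≥ 0, and μ(A) := D(A,A). Then for any f: Ω → ℝ≥0, the quantum integral ∫f dμ := ∫₀^∞ μ({ω : f(ω) > λ}) dλ equals Σ_{ω∈Ω} f(ω)μ({ω}) + Σ_{{ω,ω'}: ω≠ω'} 2·Re D(ω,ω') · min(f(ω), f(ω')). -/
/-!
For each level `t`, `μ {f > t}` is the double sum of `Re D(ω, ω')` over the pairs with
`t < min (f ω) (f ω')`, so integrating pair by pair over `t > 0` turns the quantum integral into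
`Σ_{ω, ω'} Re D(ω, ω') · min (f ω) (f ω')`. Hermiticity makes this summand symmetric, so the two
orderings of each off-diagonal pair contribute equally.
-/

open MeasureTheory Classical

open Finset in
theorem sum_sum_eq_sum_diag_add_two_mul_sum_lt {ι R : Type*} [Fintype ι] [LinearOrder ι]
    [NonAssocSemiring R] (F : ι → ι → R) (hF : ∀ a b, F a b = F b a) :
    ∑ a, ∑ b, F a b = ∑ a, F a a + ∑ a, ∑ b ∈ univ.filter (a < ·), 2 * F a b := by
  have trichotomy : ∀ a b, F a b = (if a = b then F a b else 0) +
      (if a < b then F a b else 0) + (if b < a then F a b else 0) := by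
    intro a b
    rcases lt_trichotomy a b with h | rfl | h
    · simp [h, h.ne, h.not_gt]
    · simp
    · simp [h, h.ne', h.not_gt]
  have lower_eq_upper :
      ∑ a, ∑ b, (if b < a then F a b else 0) = ∑ a, ∑ b, (if a < b then F a b else 0) := by
    rw [sum_comm]
    simp_rw [hF]
  conv_lhs => enter [2, a, 2, b]; rw [trichotomy a b]
  simp_rw [sum_add_distrib, sum_ite_eq, mem_univ, if_true, lower_eq_upper, ← sum_filter,
    two_mul, sum_add_distrib, add_assoc]

theorem setIntegral_Ioi_indicator_Iio_const {E : Type*} [NormedAddCommGroup E]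
    [NormedSpace ℝ E] [CompleteSpace E] (a : E) {c : ℝ} (hc : 0 ≤ c) :
    ∫ t in Set.Ioi 0, (Set.Iio c).indicator (fun _ => a) t = c • a := by
  rw [integral_indicator measurableSet_Iio, Measure.restrict_restrict measurableSet_Iio,
    Set.Iio_inter_Ioi, setIntegral_const, Real.volume_real_Ioo_of_le hc, sub_zero]

theorem integrableOn_Ioi_indicator_Iio_const {E : Type*} [NormedAddCommGroup E] (a : E) (c : ℝ) :
    IntegrableOn ((Set.Iio c).indicator (fun _ => a)) (Set.Ioi 0) := by
  rw [IntegrableOn, integrable_indicator_iff measurableSet_Iio, IntegrableOn,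
    Measure.restrict_restrict measurableSet_Iio, Set.Iio_inter_Ioi]
  exact integrableOn_const measure_Ioo_lt_top.ne

open Finset in
theorem setIntegral_Ioi_sum_superlevel_sum_superlevel {Ω : Type*} [Fintype Ω] (G : Ω → Ω → ℝ)
    (f : Ω → ℝ) (hf : ∀ ω, 0 ≤ f ω) :
    ∫ t in Set.Ioi 0, ∑ ω ∈ univ.filter (t < f ·), ∑ ω' ∈ univ.filter (t < f ·), G ω ω' =
      ∑ ω, ∑ ω', G ω ω' * min (f ω) (f ω') := by
  have indicator_form : ∀ t, ∑ ω ∈ univ.filter (t < f ·), ∑ ω' ∈ univ.filter (t < f ·), G ω ω' =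
      ∑ ω, ∑ ω', (Set.Iio (min (f ω) (f ω'))).indicator (fun _ => G ω ω') t := by
    intro t
    simp only [sum_filter, ite_sum_zero, Set.indicator_apply, Set.mem_Iio, lt_min_iff, ite_and]
  simp_rw [indicator_form]
  rw [integral_finsetSum _ fun ω _ => integrable_finsetSum _ fun ω' _ =>
    integrableOn_Ioi_indicator_Iio_const (G ω ω') _]
  refine sum_congr rfl fun ω _ => ?_
  rw [integral_finsetSum _ fun ω' _ => integrableOn_Ioi_indicator_Iio_const (G ω ω') _]
  refine sum_congr rfl fun ω' _ => ?_
  rw [setIntegral_Ioi_indicator_Iio_const _ (le_min (hf ω) (hf ω')), smul_eq_mul, mul_comm]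

theorem stmt_13_general {Ω : Type*} [Fintype Ω] [LinearOrder Ω] (D : Ω → Ω → ℂ)
    (hherm : ∀ ω ω', D ω ω' = starRingEnd ℂ (D ω' ω))
    (f : Ω → ℝ) (hf : ∀ ω, 0 ≤ f ω) :
    (∫ t in Set.Ioi (0 : ℝ),
        (∑ ω ∈ Finset.univ.filter (fun ω => t < f ω),
          ∑ ω' ∈ Finset.univ.filter (fun ω' => t < f ω'), D ω ω').re) =
      ∑ ω : Ω, f ω * (D ω ω).re +
        ∑ ω : Ω, ∑ ω' ∈ Finset.univ.filter (fun ω' => ω < ω'),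
          2 * (D ω ω').re * min (f ω) (f ω') := by
  simp_rw [Complex.re_sum]
  rw [setIntegral_Ioi_sum_superlevel_sum_superlevel _ f hf,
    sum_sum_eq_sum_diag_add_two_mul_sum_lt]
  · simp only [min_self, mul_comm _ (f _), mul_assoc]
  · intro ω ω'
    rw [hherm ω ω', Complex.conj_re, min_comm]

/-- On a finite sample space the quantum integral
`∫f dμ = ∫₀^∞ μ{ω : f(ω) > t} dt` equals
`Σ_ω f(ω)μ({ω}) + Σ_{{ω,ω'} : ω≠ω'} 2 Re D(ω,ω') min(f(ω), f(ω'))`. -/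
theorem stmt_13 {Ω : Type*} [Fintype Ω] [LinearOrder Ω] (D : Ω → Ω → ℂ)
    (hherm : ∀ ω ω', D ω ω' = starRingEnd ℂ (D ω' ω))
    (hpos : ∀ A : Finset Ω, 0 ≤ (∑ ω ∈ A, ∑ ω' ∈ A, D ω ω').re)
    (f : Ω → ℝ) (hf : ∀ ω, 0 ≤ f ω) :
    (∫ t in Set.Ioi (0 : ℝ),
        (∑ ω ∈ Finset.univ.filter (fun ω => t < f ω),
          ∑ ω' ∈ Finset.univ.filter (fun ω' => t < f ω'), D ω ω').re) =
      ∑ ω : Ω, f ω * (D ω ω).re +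
        ∑ ω : Ω, ∑ ω' ∈ Finset.univ.filter (fun ω' => ω < ω'),
          2 * (D ω ω').re * min (f ω) (f ω') :=
  stmt_13_general D hherm f hf
end

section
/- Let (Ω, 𝒜, μ) be a q-measure space. For disjoint A, B ∈ 𝒜 and reals 0 ≤ α ≤ β, the quantum integral of the simple function αχ_A + βχ_B equals α·μ(A∪B) + (β−α)·μ(B), equivalently α·μ(A) + β·μ(B) + α·I(A,B) where I(A,B) = μ(A∪B) − μ(A) − μ(B). -/
/-!
For `t > 0` the superlevel set `{αχ_A + βχ_B > t}` is `A ∪ B` while `t < α`, then `B` while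
`t < β`, then empty. So the integrand is a step function in `t`, whose integral over `(0, ∞)`
is `α μ(A ∪ B) + (β - α) μ(B)`.
-/

open MeasureTheory Set

theorem integrableOn_Ioi_zero_indicator_Iio (a c : ℝ) :
    IntegrableOn ((Iio a).indicator fun _ => c) (Ioi 0) := by
  rw [IntegrableOn, integrable_indicator_iff measurableSet_Iio, IntegrableOn,
    Measure.restrict_restrict measurableSet_Iio]
  exact integrableOn_const (by simp [Iio_inter_Ioi])

theorem setIntegral_Ioi_zero_indicator_Iio {a : ℝ} (ha : 0 ≤ a) (c : ℝ) :
    ∫ t in Ioi 0, (Iio a).indicator (fun _ => c) t = a * c := by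
  rw [setIntegral_indicator measurableSet_Iio, Ioi_inter_Iio, setIntegral_const,
    Real.volume_real_Ioo_of_le ha, sub_zero, smul_eq_mul]

theorem setIntegral_Ioi_zero_step {a b : ℝ} (ha : 0 ≤ a) (hab : a ≤ b) (c d : ℝ) :
    ∫ t in Ioi 0, (if t < a then c else if t < b then d else 0) = a * c + (b - a) * d := by
  have hstep : (fun t : ℝ => if t < a then c else if t < b then d else 0) =
      fun t => (Iio a).indicator (fun _ => c - d) t + (Iio b).indicator (fun _ => d) t := by
    ext t
    by_cases hta : t < a
    · simp [indicator, hta, hta.trans_le hab]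
    · by_cases htb : t < b <;> simp [indicator, hta, htb]
  rw [hstep, integral_add (integrableOn_Ioi_zero_indicator_Iio _ _)
    (integrableOn_Ioi_zero_indicator_Iio _ _), setIntegral_Ioi_zero_indicator_Iio ha,
    setIntegral_Ioi_zero_indicator_Iio (ha.trans hab)]
  ring

theorem setOf_mul_indicator_add_mul_indicator_gt {Ω : Type*} {A B : Set Ω} (hAB : Disjoint A B)
    {α β t : ℝ} (hαβ : α ≤ β) (ht : 0 ≤ t) :
    {ω | α * A.indicator (fun _ => (1 : ℝ)) ω + β * B.indicator (fun _ => (1 : ℝ)) ω > t} =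
      if t < α then A ∪ B else if t < β then B else ∅ := by
  ext ω
  by_cases hωA : ω ∈ A
  · have hωB : ω ∉ B := hAB.notMem_of_mem_left hωA
    split_ifs with h1 h2 <;> simp [hωA, hωB] <;> linarith
  · by_cases hωB : ω ∈ B <;> split_ifs with h1 h2 <;> simp [hωA, hωB] <;> linarith

theorem stmt_15_general {Ω : Type*} [MeasurableSpace Ω] (μ : Set Ω → ℝ)
    (hempty : μ ∅ = 0)
    (A B : Set Ω) (hAB : Disjoint A B)
    (α β : ℝ) (hα : 0 ≤ α) (hαβ : α ≤ β) :
    (∫ t in Set.Ioi (0 : ℝ),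
        μ {ω | α * A.indicator (fun _ => (1 : ℝ)) ω
          + β * B.indicator (fun _ => (1 : ℝ)) ω > t}) = α * μ (A ∪ B) + (β - α) * μ B ∧
      (∫ t in Set.Ioi (0 : ℝ),
        μ {ω | α * A.indicator (fun _ => (1 : ℝ)) ω
          + β * B.indicator (fun _ => (1 : ℝ)) ω > t}) =
        α * μ A + β * μ B + α * (μ (A ∪ B) - μ A - μ B) := by
  have hlevel : EqOn
      (fun t => μ {ω | α * A.indicator (fun _ => (1 : ℝ)) ω
        + β * B.indicator (fun _ => (1 : ℝ)) ω > t})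
      (fun t => if t < α then μ (A ∪ B) else if t < β then μ B else 0) (Ioi 0) := by
    intro t ht
    simp only [setOf_mul_indicator_add_mul_indicator_gt hAB hαβ (le_of_lt ht)]
    split_ifs <;> simp [hempty]
  have hintegral : (∫ t in Ioi (0 : ℝ),
      μ {ω | α * A.indicator (fun _ => (1 : ℝ)) ω
        + β * B.indicator (fun _ => (1 : ℝ)) ω > t}) = α * μ (A ∪ B) + (β - α) * μ B := by
    rw [setIntegral_congr_fun measurableSet_Ioi hlevel]
    exact setIntegral_Ioi_zero_step hα hαβ _ _
  exact ⟨hintegral, by rw [hintegral]; ring⟩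

/-- The quantum integral of the simple function `αχ_A + βχ_B` (disjoint `A,B`,
`0 ≤ α ≤ β`) equals `α·μ(A∪B) + (β−α)·μ(B)`, equivalently
`α·μ(A) + β·μ(B) + α·I(A,B)`. -/
theorem stmt_15 {Ω : Type*} [MeasurableSpace Ω] (μ : Set Ω → ℝ)
    (hnonneg : ∀ A, MeasurableSet A → 0 ≤ μ A)
    (hempty : μ ∅ = 0)
    (A B : Set Ω) (hA : MeasurableSet A) (hB : MeasurableSet B) (hAB : Disjoint A B)
    (α β : ℝ) (hα : 0 ≤ α) (hαβ : α ≤ β) :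
    (∫ t in Set.Ioi (0 : ℝ),
        μ {ω | α * A.indicator (fun _ => (1 : ℝ)) ω
          + β * B.indicator (fun _ => (1 : ℝ)) ω > t}) = α * μ (A ∪ B) + (β - α) * μ B ∧
      (∫ t in Set.Ioi (0 : ℝ),
        μ {ω | α * A.indicator (fun _ => (1 : ℝ)) ω
          + β * B.indicator (fun _ => (1 : ℝ)) ω > t}) =
        α * μ A + β * μ B + α * (μ (A ∪ B) - μ A - μ B) :=
  stmt_15_general μ hempty A B hAB α β hα hαβ
end

section
/- Let (Ω, 𝒜, μ) be a q-measure space with μ(∅) = 0, let A₁,…,Aₙ ∈ 𝒜 be mutually disjoint, and let 0 ≤ α₁ ≤ α₂ ≤ ⋯ ≤ αₙ. Then the quantum integral of the simple function Σᵢ αᵢ χ_{Aᵢ} equals α₁[μ(⋃_{i=1}^n Aᵢ) − μ(⋃_{i=2}^n Aᵢ)] + α₂[μ(⋃_{i=2}^n Aᵢ) − μ(⋃_{i=3}^n Aᵢ)] + ⋯ + α_{n−1}[μ(A_{n−1} ∪ Aₙ) − μ(Aₙ)] + αₙ μ(Aₙ). -/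
open MeasureTheory Function

/-!
For `t ≥ 0` the level set `{f > t}` of `f = Σᵢ αᵢ χ_{Aᵢ}` is `⋃_{t < αᵢ} Aᵢ`, and by
monotonicity of `α` the indices with `t < αᵢ` form an upper set `S`. Writing
`dᵢ = μ(⋃_{j ≥ i} Aⱼ) − μ(⋃_{j > i} Aⱼ)`, the sum `Σ_{i ∈ S} dᵢ` telescopes to `μ(⋃_{i ∈ S} Aᵢ)`,
so `t ↦ μ{f > t}` is the step function `Σᵢ dᵢ χ_{(-∞, αᵢ)}` on `(0, ∞)`, whose integral is
`Σᵢ αᵢ dᵢ`.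
-/

theorem Finset.sum_sub_filter_le_filter_lt {ι M : Type*} [LinearOrder ι] [AddCommGroup M]
    (g : Finset ι → M) (s : Finset ι) :
    ∑ i ∈ s, (g (s.filter (i ≤ ·)) - g (s.filter (i < ·))) = g s - g ∅ := by
  classical
  induction s using Finset.induction_on_min with
  | empty => simp
  | insert a s ha ih =>
    have haS : a ∉ s := fun h => lt_irrefl a (ha a h)
    have hle : (insert a s).filter (a ≤ ·) = insert a s :=
      Finset.filter_true_of_mem fun x hx => by
        rcases Finset.mem_insert.mp hx with rfl | hx
        exacts [le_rfl, (ha x hx).le]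
    have hlt : (insert a s).filter (a < ·) = s := by
      rw [Finset.filter_insert, if_neg (lt_irrefl a), Finset.filter_true_of_mem ha]
    have htail : ∀ i ∈ s, ∀ p : ι → Prop, [DecidablePred p] → (∀ j, p j → i ≤ j) →
        (insert a s).filter p = s.filter p := fun i hi p _ hp => by
      rw [Finset.filter_insert, if_neg fun h => (ha i hi).not_ge (hp a h)]
    rw [Finset.sum_insert haS, hle, hlt,
      Finset.sum_congr rfl fun i hi => by
        rw [htail i hi (i ≤ ·) fun _ h => h, htail i hi (i < ·) fun _ h => h.le],
      ih]
    abel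

section SimpleFunction

variable {Ω ι : Type*} [Fintype ι] {A : ι → Set Ω}

theorem sum_mul_indicator_of_mem (hdisj : Pairwise (Disjoint on A)) (α : ι → ℝ)
    {ω : Ω} {k : ι} (hk : ω ∈ A k) :
    ∑ i, α i * (A i).indicator (fun _ => (1 : ℝ)) ω = α k := by
  rw [Finset.sum_eq_single k]
  · simp [hk]
  · intro i _ hik
    simp [Set.indicator_of_notMem ((hdisj hik).notMem_of_mem_right hk)]
  · simp

theorem setOf_sum_mul_indicator_gt (hdisj : Pairwise (Disjoint on A)) (α : ι → ℝ)
    {t : ℝ} (ht : 0 ≤ t) :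
    {ω | ∑ i, α i * (A i).indicator (fun _ => (1 : ℝ)) ω > t} =
      ⋃ i ∈ Finset.univ.filter (t < α ·), A i := by
  ext ω
  simp only [Set.mem_ofPred_eq, Set.mem_iUnion, Finset.mem_filter, Finset.mem_univ, true_and,
    exists_prop]
  by_cases hω : ∃ k, ω ∈ A k
  · obtain ⟨k, hk⟩ := hω
    rw [sum_mul_indicator_of_mem hdisj α hk]
    refine ⟨fun h => ⟨k, h, hk⟩, fun ⟨i, hi, hωi⟩ => ?_⟩
    rwa [← hdisj.eq (Set.not_disjoint_iff.mpr ⟨ω, hωi, hk⟩)]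
  · push Not at hω
    simp [ht.not_gt, hω]

end SimpleFunction

theorem setIntegral_Ioi_indicator_Iio {a : ℝ} (ha : 0 ≤ a) (c : ℝ) :
    ∫ t in Set.Ioi (0 : ℝ), (Set.Iio a).indicator (fun _ => c) t = a * c := by
  rw [setIntegral_indicator measurableSet_Iio, Set.Ioi_inter_Iio, setIntegral_const,
    Real.volume_real_Ioo_of_le ha, smul_eq_mul, sub_zero]

theorem integrableOn_Ioi_indicator_Iio (a c : ℝ) :
    IntegrableOn ((Set.Iio a).indicator fun _ => c) (Set.Ioi 0) := by
  rw [IntegrableOn, integrable_indicator_iff measurableSet_Iio, IntegrableOn,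
    Measure.restrict_restrict measurableSet_Iio, Set.Iio_inter_Ioi]
  exact integrableOn_const (by simp)

theorem measure_setOf_sum_mul_indicator_gt {Ω ι : Type*} [Fintype ι] [LinearOrder ι]
    [LocallyFiniteOrderTop ι] (μ : Set Ω → ℝ) (hempty : μ ∅ = 0) {A : ι → Set Ω}
    (hdisj : Pairwise (Disjoint on A)) {α : ι → ℝ} (hmono : Monotone α) {t : ℝ} (ht : 0 ≤ t) :
    μ {ω | ∑ i, α i * (A i).indicator (fun _ => (1 : ℝ)) ω > t} =
      ∑ i, (Set.Iio (α i)).indicator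
        (fun _ => μ (⋃ j ∈ Finset.Ici i, A j) - μ (⋃ j ∈ Finset.Ioi i, A j)) t := by
  set S := Finset.univ.filter (t < α ·)
  have hS : ∀ i ∈ S, S.filter (i ≤ ·) = Finset.Ici i ∧ S.filter (i < ·) = Finset.Ioi i := by
    intro i hi
    have hup : ∀ j, i ≤ j → j ∈ S := fun j hij => by
      simpa [S] using (Finset.mem_filter.mp hi).2.trans_le (hmono hij)
    constructor <;> ext j <;> simp only [Finset.mem_filter, Finset.mem_Ici, Finset.mem_Ioi] <;>
      exact ⟨And.right, fun h => ⟨hup j (by order), h⟩⟩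
  calc μ {ω | ∑ i, α i * (A i).indicator (fun _ => (1 : ℝ)) ω > t}
      = μ (⋃ j ∈ S, A j) - μ (⋃ j ∈ (∅ : Finset ι), A j) := by
        simp [setOf_sum_mul_indicator_gt hdisj α ht, S, hempty]
    _ = ∑ i ∈ S, (μ (⋃ j ∈ S.filter (i ≤ ·), A j) - μ (⋃ j ∈ S.filter (i < ·), A j)) :=
        (Finset.sum_sub_filter_le_filter_lt (fun T => μ (⋃ j ∈ T, A j)) S).symm
    _ = ∑ i ∈ S, (μ (⋃ j ∈ Finset.Ici i, A j) - μ (⋃ j ∈ Finset.Ioi i, A j)) :=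
        Finset.sum_congr rfl fun i hi => by rw [(hS i hi).1, (hS i hi).2]
    _ = _ := by
        rw [Finset.sum_filter]
        simp [Set.indicator_apply]

theorem stmt_16_general {Ω : Type*} (μ : Set Ω → ℝ)
    (hempty : μ ∅ = 0)
    (n : ℕ) (A : Fin n → Set Ω)
    (hdisj : ∀ i j, i ≠ j → Disjoint (A i) (A j))
    (α : Fin n → ℝ) (h0 : ∀ i, 0 ≤ α i) (hmono : Monotone α) :
    (∫ t in Set.Ioi (0 : ℝ),
        μ {ω | ∑ i, α i * (A i).indicator (fun _ => (1 : ℝ)) ω > t}) =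
      ∑ i, α i * (μ (⋃ j ∈ Finset.Ici i, A j) - μ (⋃ j ∈ Finset.Ioi i, A j)) := by
  rw [setIntegral_congr_fun measurableSet_Ioi fun t ht =>
      measure_setOf_sum_mul_indicator_gt μ hempty (fun i j => hdisj i j) hmono (le_of_lt ht),
    integral_finsetSum _ fun i _ => integrableOn_Ioi_indicator_Iio _ _]
  exact Finset.sum_congr rfl fun i _ => setIntegral_Ioi_indicator_Iio (h0 i) _

/-- The quantum integral of a simple function `Σᵢ αᵢ χ_{Aᵢ}` with mutually disjoint
`Aᵢ` and `0 ≤ α₁ ≤ ⋯ ≤ αₙ` equals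
`Σᵢ αᵢ·[μ(⋃_{j≥i} Aⱼ) − μ(⋃_{j>i} Aⱼ)]`. -/
theorem stmt_16 {Ω : Type*} [MeasurableSpace Ω] (μ : Set Ω → ℝ)
    (hnonneg : ∀ A, MeasurableSet A → 0 ≤ μ A)
    (hempty : μ ∅ = 0)
    (n : ℕ) (A : Fin n → Set Ω) (hA : ∀ i, MeasurableSet (A i))
    (hdisj : ∀ i j, i ≠ j → Disjoint (A i) (A j))
    (α : Fin n → ℝ) (h0 : ∀ i, 0 ≤ α i) (hmono : Monotone α) :
    (∫ t in Set.Ioi (0 : ℝ),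
        μ {ω | ∑ i, α i * (A i).indicator (fun _ => (1 : ℝ)) ω > t}) =
      ∑ i, α i * (μ (⋃ j ∈ Finset.Ici i, A j) - μ (⋃ j ∈ Finset.Ioi i, A j)) :=
  stmt_16_general μ hempty n A hdisj α h0 hmono
end
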